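/- Let (Ω, F, P) be a probability space with a sub-σ-algebra G ⊆ F. If X : [0,T] × Ω → ℝ is B([0,T]) ⊗ F-measurable, nonnegative, and E[X_u] < ∞ for each u ∈ [0,T], then there exists a version of the map (u,ω) ↦ E[X_u | G](ω) that is B([0,T]) ⊗ G-measurable. -/

import Mathlib

open MeasureTheory

open Filter Topology


namespace SYaux

/-- Monotone convergence for conditional expectations (a.e. convergence). -/
lemma tendsto_condexp_of_monotone {Ω : Type*} [mΩ : MeasurableSpace Ω] {μ : Measure Ω}
    [IsFiniteMeasure μ] {G : MeasurableSpace Ω} (hG : G ≤ mΩ) [SigmaFinite (μ.trim hG)]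
    {fs : ℕ → Ω → ℝ} {f : Ω → ℝ}
    (hmono : ∀ ω, Monotone fun n => fs n ω)
    (hnonneg : ∀ n ω, 0 ≤ fs n ω)
    (hle : ∀ n ω, fs n ω ≤ f ω)
    (hint : ∀ n, Integrable (fs n) μ) (hfint : Integrable f μ)
    (htend : ∀ ω, Tendsto (fun n => fs n ω) atTop (𝓝 (f ω))) :
    ∀ᵐ ω ∂μ, Tendsto (fun n => (μ[fs n | G]) ω) atTop (𝓝 ((μ[f | G]) ω)) := by
  have hL1 : Tendsto (fun n => condExpL1 hG μ (fs n)) atTop (𝓝 (condExpL1 hG μ f)) :=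
    tendsto_condExpL1_of_dominated_convergence hG f (fun n => (hint n).aestronglyMeasurable)
      hfint (fun n => Eventually.of_forall fun ω => by
        rw [Real.norm_eq_abs, abs_of_nonneg (hnonneg n ω)]; exact hle n ω)
      (Eventually.of_forall htend)
  have hinM : TendstoInMeasure μ (fun n => (condExpL1 hG μ (fs n) : Ω → ℝ)) atTop
      (condExpL1 hG μ f) := tendstoInMeasure_of_tendsto_Lp hL1
  obtain ⟨ns, hns, hae⟩ := hinM.exists_seq_tendsto_ae
  have heq : ∀ᵐ ω ∂μ, ∀ n, (μ[fs n | G]) ω = condExpL1 hG μ (fs n) ω :=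
    ae_all_iff.2 fun n => condExp_ae_eq_condExpL1 hG (fs n)
  have heqf : ∀ᵐ ω ∂μ, (μ[f | G]) ω = condExpL1 hG μ f ω := condExp_ae_eq_condExpL1 hG f
  have hm : ∀ᵐ ω ∂μ, ∀ n, (μ[fs n | G]) ω ≤ (μ[fs (n + 1) | G]) ω :=
    ae_all_iff.2 fun n => condExp_mono (hint n) (hint (n + 1))
      (Eventually.of_forall fun ω => hmono ω (Nat.le_succ n))
  filter_upwards [hae, heq, heqf, hm] with ω hae heq heqf hm
  have hmono' : Monotone fun n => (μ[fs n | G]) ω := monotone_nat_of_le_succ hm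
  have hsub : Tendsto (fun i => (μ[fs (ns i) | G]) ω) atTop (𝓝 ((μ[f | G]) ω)) := by
    rw [heqf]; exact hae.congr fun i => (heq (ns i)).symm
  rcases tendsto_of_monotone hmono' with h | ⟨l, hl⟩
  · exact absurd (h.comp hns.tendsto_atTop) (not_tendsto_atTop_of_tendsto_nhds hsub)
  · have h2 : Tendsto (fun i => (μ[fs (ns i) | G]) ω) atTop (𝓝 l) :=
      hl.comp hns.tendsto_atTop
    rwa [tendsto_nhds_unique h2 hsub] at hl

noncomputable def limY {δ : Type*} (Z : ℕ → δ → ℝ) (p : δ) : ℝ :=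
  (Filter.limsup (fun n => ENNReal.ofReal (Z n p)) Filter.atTop).toReal

lemma limY_measurable {δ : Type*} {m' : MeasurableSpace δ} {Z : ℕ → δ → ℝ}
    (hZ : ∀ n, Measurable[m'] (Z n)) : Measurable[m'] (limY Z) :=
  ENNReal.measurable_toReal.comp
    (Measurable.limsup fun n => ENNReal.measurable_ofReal.comp (hZ n))

lemma limY_ae_eq {Ω : Type*} [MeasurableSpace Ω] {μ : Measure Ω} {Z : ℕ → Ω → ℝ} {W : Ω → ℝ}
    (hW : 0 ≤ᵐ[μ] W) (h : ∀ᵐ ω ∂μ, Tendsto (fun n => Z n ω) atTop (𝓝 (W ω))) :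
    (fun ω => limY Z ω) =ᵐ[μ] W := by
  filter_upwards [hW, h] with ω hW h
  have h2 : Tendsto (fun n => ENNReal.ofReal (Z n ω)) atTop (𝓝 (ENNReal.ofReal (W ω))) :=
    (ENNReal.continuous_ofReal.tendsto _).comp h
  simp only [limY, h2.limsup_eq, ENNReal.toReal_ofReal hW]



noncomputable def phi (n : ℕ) (x : ℝ) : ℝ :=
  ((min (n * 2 ^ n) (Nat.floor ((2 : ℝ) ^ n * x)) : ℕ) : ℝ) / 2 ^ n

lemma phi_nonneg (n : ℕ) (x : ℝ) : 0 ≤ phi n x := by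
  unfold phi; positivity

lemma phi_le (n : ℕ) {x : ℝ} (hx : 0 ≤ x) : phi n x ≤ x := by
  unfold phi
  rw [div_le_iff₀ (by positivity : (0:ℝ) < 2 ^ n)]
  calc ((min (n * 2 ^ n) (Nat.floor ((2 : ℝ) ^ n * x)) : ℕ) : ℝ)
      ≤ ((Nat.floor ((2 : ℝ) ^ n * x) : ℕ) : ℝ) := by exact_mod_cast Nat.cast_le.2 (min_le_right _ _)
    _ ≤ (2 : ℝ) ^ n * x := Nat.floor_le (by positivity)
    _ = x * 2 ^ n := by ring

lemma phi_mono (x : ℝ) (hx : 0 ≤ x) : Monotone fun n => phi n x := by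
  apply monotone_nat_of_le_succ
  intro n
  have key : 2 * min (n * 2 ^ n) (Nat.floor ((2 : ℝ) ^ n * x)) ≤
      min ((n + 1) * 2 ^ (n + 1)) (Nat.floor ((2 : ℝ) ^ (n + 1) * x)) := by
    apply le_min
    · calc 2 * min (n * 2 ^ n) (Nat.floor ((2 : ℝ) ^ n * x)) ≤ 2 * (n * 2 ^ n) :=
        Nat.mul_le_mul_left _ (min_le_left _ _)
      _ = n * 2 ^ (n + 1) := by ring
      _ ≤ (n + 1) * 2 ^ (n + 1) := Nat.mul_le_mul_right _ (Nat.le_succ n)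
    · calc 2 * min (n * 2 ^ n) (Nat.floor ((2 : ℝ) ^ n * x)) ≤ 2 * Nat.floor ((2 : ℝ) ^ n * x) :=
        Nat.mul_le_mul_left _ (min_le_right _ _)
      _ ≤ Nat.floor ((2 : ℝ) ^ (n + 1) * x) := by
          apply Nat.le_floor
          push_cast
          rw [pow_succ]
          have := Nat.floor_le (show (0:ℝ) ≤ 2 ^ n * x by positivity)
          nlinarith
  unfold phi
  rw [div_le_div_iff₀ (by positivity) (by positivity)]
  calc ((min (n * 2 ^ n) (Nat.floor ((2 : ℝ) ^ n * x)) : ℕ) : ℝ) * 2 ^ (n + 1)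
      = ((2 * min (n * 2 ^ n) (Nat.floor ((2 : ℝ) ^ n * x)) : ℕ) : ℝ) * 2 ^ n := by
        push_cast; ring
    _ ≤ ((min ((n + 1) * 2 ^ (n + 1)) (Nat.floor ((2 : ℝ) ^ (n + 1) * x)) : ℕ) : ℝ) * 2 ^ n := by
        have : ((2 * min (n * 2 ^ n) (Nat.floor ((2 : ℝ) ^ n * x)) : ℕ) : ℝ) ≤
            ((min ((n + 1) * 2 ^ (n + 1)) (Nat.floor ((2 : ℝ) ^ (n + 1) * x)) : ℕ) : ℝ) :=
          Nat.cast_le.2 key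
        nlinarith [pow_pos (show (0:ℝ) < 2 by norm_num) n]

lemma phi_tendsto {x : ℝ} (hx : 0 ≤ x) : Tendsto (fun n => phi n x) atTop (𝓝 x) := by
  have hb : ∀ᶠ n in atTop, x - (1 / 2 : ℝ) ^ n ≤ phi n x := by
    filter_upwards [eventually_gt_atTop (Nat.floor x)] with n hn
    have hxn : x < n := lt_of_lt_of_le (Nat.lt_floor_add_one x)
      (by exact_mod_cast Nat.succ_le_of_lt hn)
    have hfl : Nat.floor ((2 : ℝ) ^ n * x) ≤ n * 2 ^ n := by
      apply Nat.floor_le_of_le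
      push_cast
      nlinarith [pow_pos (show (0:ℝ) < 2 by norm_num) n]
    have hmin : min (n * 2 ^ n) (Nat.floor ((2 : ℝ) ^ n * x)) =
        Nat.floor ((2 : ℝ) ^ n * x) := min_eq_right hfl
    unfold phi
    rw [hmin, le_div_iff₀ (by positivity : (0:ℝ) < 2 ^ n)]
    have := Nat.sub_one_lt_floor ((2 : ℝ) ^ n * x)
    have h2 : (1 / 2 : ℝ) ^ n * 2 ^ n = 1 := by
      rw [← mul_pow]; norm_num
    nlinarith
  have hb2 : ∀ᶠ n in atTop, phi n x ≤ x := Eventually.of_forall fun n => phi_le n hx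
  have h1 : Tendsto (fun n => x - (1 / 2 : ℝ) ^ n) atTop (𝓝 x) := by
    have := tendsto_pow_atTop_nhds_zero_of_lt_one (show (0:ℝ) ≤ 1/2 by norm_num)
      (show (1/2:ℝ) < 1 by norm_num)
    simpa using tendsto_const_nhds.sub this
  exact tendsto_of_tendsto_of_tendsto_of_le_of_le' h1 tendsto_const_nhds hb hb2

/-- The sum-of-indicators representation of `phi`. -/
lemma sum_indicator_eq_phi {δ : Type*} (f : δ → ℝ) (hf : ∀ p, 0 ≤ f p) (n : ℕ) (p : δ) :
    (2 ^ n : ℝ)⁻¹ * ∑ k ∈ Finset.Icc 1 (n * 2 ^ n),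
      Set.indicator {q | (k : ℝ) ≤ 2 ^ n * f q} (fun _ => (1 : ℝ)) p = phi n (f p) := by
  classical
  have hy : (0 : ℝ) ≤ 2 ^ n * f p := mul_nonneg (by positivity) (hf p)
  have hsum : ∑ k ∈ Finset.Icc 1 (n * 2 ^ n),
      Set.indicator {q | (k : ℝ) ≤ 2 ^ n * f q} (fun _ => (1 : ℝ)) p =
      (((Finset.Icc 1 (n * 2 ^ n)).filter (fun k : ℕ => (k : ℝ) ≤ 2 ^ n * f p)).card : ℝ) := by
    rw [← Finset.sum_boole]
    apply Finset.sum_congr rfl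
    intro k _
    by_cases h : (k : ℝ) ≤ 2 ^ n * f p <;> simp [Set.indicator_apply, h]
  have hfilter : (Finset.Icc 1 (n * 2 ^ n)).filter (fun k : ℕ => (k : ℝ) ≤ 2 ^ n * f p) =
      Finset.Icc 1 (min (n * 2 ^ n) (Nat.floor ((2 : ℝ) ^ n * f p))) := by
    ext k
    simp only [Finset.mem_filter, Finset.mem_Icc, le_min_iff]
    constructor
    · rintro ⟨⟨h1, h2⟩, h3⟩
      exact ⟨h1, h2, Nat.le_floor h3⟩
    · rintro ⟨h1, h2, h3⟩
      exact ⟨⟨h1, h2⟩, (Nat.le_floor_iff hy).1 h3⟩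
  rw [hsum, hfilter, Nat.card_Icc]
  unfold phi
  simp only [Nat.add_sub_cancel]
  rw [inv_mul_eq_div]


end SYaux

open SYaux

/-- Measurable version of conditional expectations (Stricker–Yor): if
`X : [0,T] × Ω → ℝ` is `B([0,T]) ⊗ F`-measurable, nonnegative and integrable in `ω` for each
`u ∈ [0,T]`, then `(u, ω) ↦ E[X_u | G](ω)` admits a `B([0,T]) ⊗ G`-measurable version. -/
theorem measurable_condexp_version {Ω : Type*} [mΩ : MeasurableSpace Ω]
    (μ : Measure Ω) [IsProbabilityMeasure μ] (G : MeasurableSpace Ω) (hG : G ≤ mΩ)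
    (T : ℝ) (hT : 0 ≤ T) (X : ℝ × Ω → ℝ) (hX : Measurable[(inferInstance : MeasurableSpace ℝ).prod mΩ] X)
    (hXnonneg : ∀ p, 0 ≤ X p)
    (hXint : ∀ u ∈ Set.Icc (0 : ℝ) T, Integrable (fun ω => X (u, ω)) μ) :
    ∃ Y : ℝ × Ω → ℝ,
      Measurable[(inferInstance : MeasurableSpace ℝ).prod G] Y ∧
      ∀ u ∈ Set.Icc (0 : ℝ) T,
        (fun ω => Y (u, ω)) =ᵐ[μ] μ[(fun ω => X (u, ω)) | G] := by
  classical
  letI : MeasurableSpace Ω := mΩ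
  haveI : IsFiniteMeasure (μ.trim hG) :=
    ⟨by rw [trim_measurableSet_eq hG MeasurableSet.univ]; exact measure_lt_top μ _⟩
  haveI : SigmaFinite (μ.trim hG) := inferInstance
  have hX' : Measurable X := hX
  -- integrability of indicator slices
  have hind_int : ∀ (t : Set (ℝ × Ω)), MeasurableSet t → ∀ u : ℝ,
      Integrable (fun ω => t.indicator (fun _ => (1 : ℝ)) (u, ω)) μ := by
    intro t ht u
    refine Integrable.mono' (integrable_const 1)
      (((measurable_const.indicator ht).comp measurable_prodMk_left).aestronglyMeasurable)
      (Eventually.of_forall fun ω => ?_)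
    by_cases h : (u, ω) ∈ t <;> simp [Set.indicator_apply, h]
  -- Step 1: the statement for indicators of measurable sets
  have hC : ∀ t : Set (ℝ × Ω), MeasurableSet t →
      ∃ Y : ℝ × Ω → ℝ, Measurable[(inferInstance : MeasurableSpace ℝ).prod G] Y ∧
        ∀ u ∈ Set.Icc (0 : ℝ) T,
          (fun ω => Y (u, ω)) =ᵐ[μ] μ[(fun ω => t.indicator (fun _ => (1 : ℝ)) (u, ω)) | G] := by
    refine MeasurableSpace.induction_on_inter generateFrom_prod.symm isPiSystem_prod ?_ ?_ ?_ ?_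
    · -- empty set
      refine ⟨0, @measurable_const ℝ _ _ ((inferInstance : MeasurableSpace ℝ).prod G) 0,
        fun u hu => ?_⟩
      have h0 : (fun ω : Ω => Set.indicator (∅ : Set (ℝ × Ω)) (fun _ => (1 : ℝ)) (u, ω)) =
          (0 : Ω → ℝ) := by funext ω; simp
      rw [h0, condExp_zero]
      rfl
    · -- rectangles
      rintro t ⟨A, hA, B, hB, rfl⟩
      simp only [Set.mem_setOf_eq] at hA hB
      refine ⟨fun p => A.indicator (fun _ => (1 : ℝ)) p.1 *
          (μ[B.indicator (fun _ => (1 : ℝ)) | G]) p.2, ?_, fun u hu => ?_⟩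
      · exact ((measurable_const.indicator hA).comp (@measurable_fst ℝ Ω _ G)).mul
          (stronglyMeasurable_condExp.measurable.comp (@measurable_snd ℝ Ω _ G))
      · have hkey : (fun ω : Ω => (A ×ˢ B).indicator (fun _ => (1 : ℝ)) (u, ω)) =
            (A.indicator (fun _ => (1 : ℝ)) u) • (B.indicator fun _ => (1 : ℝ)) := by
          funext ω
          by_cases hu' : u ∈ A <;> by_cases hω : ω ∈ B <;>
            simp [Set.indicator_apply, Set.mem_prod, hu', hω]
        rw [hkey]
        exact (condExp_smul (A.indicator (fun _ => (1 : ℝ)) u)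
          (B.indicator fun _ => (1 : ℝ)) G).symm
    · -- complements
      rintro t ht ⟨Y, hY, hYu⟩
      refine ⟨fun p => 1 - Y p, (@measurable_const ℝ _ _
        ((inferInstance : MeasurableSpace ℝ).prod G) 1).sub hY, fun u hu => ?_⟩
      have hkey : (fun ω : Ω => tᶜ.indicator (fun _ => (1 : ℝ)) (u, ω)) =
          (fun _ : Ω => (1 : ℝ)) - fun ω => t.indicator (fun _ => (1 : ℝ)) (u, ω) := by
        funext ω
        by_cases h : (u, ω) ∈ t <;> simp [Set.indicator_apply, h]
      rw [hkey]
      refine EventuallyEq.trans ?_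
        (condExp_sub (integrable_const 1) (hind_int t ht u) G).symm
      rw [condExp_const hG (1 : ℝ)]
      filter_upwards [hYu u hu] with ω hω
      simp only [Pi.sub_apply, hω]
    · -- countable disjoint unions
      intro f hdisj hfm hCf
      choose Y hYmeas hYu using hCf
      set Z : ℕ → ℝ × Ω → ℝ := fun n p => ∑ i ∈ Finset.range n, Y i p with hZdef
      have hZmeas : ∀ n, Measurable[(inferInstance : MeasurableSpace ℝ).prod G] (Z n) :=
        fun n => Finset.measurable_sum (Finset.range n) fun i _ => hYmeas i
      -- partial sums of indicators equal indicator of partial union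
      have hsum : ∀ n (p : ℝ × Ω), ∑ i ∈ Finset.range n, (f i).indicator (fun _ => (1 : ℝ)) p =
          (⋃ i ∈ Finset.range n, f i).indicator (fun _ => (1 : ℝ)) p := by
        intro n
        induction n with
        | zero => intro p; simp
        | succ n ih =>
          intro p
          have hdis : Disjoint (⋃ i ∈ Finset.range n, f i) (f n) := by
            simp only [Set.disjoint_iUnion_left]
            intro i hi
            exact hdisj (Finset.mem_range.1 hi).ne
          have hU : (⋃ i ∈ Finset.range (n + 1), f i) =
              (⋃ i ∈ Finset.range n, f i) ∪ f n := by
            rw [Finset.range_add_one]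
            rw [show (⋃ i ∈ insert n (Finset.range n), f i) =
              f n ∪ ⋃ i ∈ Finset.range n, f i by simp [Set.biUnion_insert]]
            exact Set.union_comm _ _
          rw [hU, Set.indicator_union_of_disjoint hdis, Finset.sum_range_succ, ih p]
      refine ⟨limY Z, limY_measurable hZmeas, fun u hu => ?_⟩
      set g : Ω → ℝ := fun ω => (⋃ i, f i).indicator (fun _ => (1 : ℝ)) (u, ω) with hgdef
      have hUnionMeas : MeasurableSet (⋃ i, f i) := MeasurableSet.iUnion hfm
      have hfs_int : ∀ n, Integrable
          (fun ω => ∑ i ∈ Finset.range n, (f i).indicator (fun _ => (1 : ℝ)) (u, ω)) μ :=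
        fun n => integrable_finset_sum _ fun i _ => hind_int (f i) (hfm i) u
      have htd : ∀ ω : Ω, Tendsto
          (fun n => ∑ i ∈ Finset.range n, (f i).indicator (fun _ => (1 : ℝ)) (u, ω))
          atTop (𝓝 (g ω)) := by
        intro ω
        by_cases hω : (u, ω) ∈ ⋃ i, f i
        · obtain ⟨i0, hi0⟩ := Set.mem_iUnion.1 hω
          have hconst : ∀ n ≥ i0 + 1,
              g ω = ∑ i ∈ Finset.range n, (f i).indicator (fun _ => (1 : ℝ)) (u, ω) := by
            intro n hn
            have hmem : (u, ω) ∈ ⋃ i ∈ Finset.range n, f i :=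
              Set.mem_iUnion.2 ⟨i0, Set.mem_iUnion.2 ⟨Finset.mem_range.2 (by omega), hi0⟩⟩
            rw [hsum n (u, ω), hgdef]
            simp only
            rw [Set.indicator_of_mem hω, Set.indicator_of_mem hmem]
          refine Tendsto.congr' ?_ (tendsto_const_nhds (x := g ω))
          filter_upwards [eventually_ge_atTop (i0 + 1)] with n hn
          exact hconst n hn
        · have hz : ∀ n, ∑ i ∈ Finset.range n, (f i).indicator (fun _ => (1 : ℝ)) (u, ω)
              = 0 := fun n => Finset.sum_eq_zero fun i _ =>
            Set.indicator_of_notMem (fun h => hω (Set.mem_iUnion.2 ⟨i, h⟩)) _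
          have hg0 : g ω = 0 := Set.indicator_of_notMem hω _
          simp only [hz, hg0]
          exact tendsto_const_nhds
      have hA := tendsto_condexp_of_monotone (μ := μ) hG
        (fs := fun n ω => ∑ i ∈ Finset.range n, (f i).indicator (fun _ => (1 : ℝ)) (u, ω))
        (f := g)
        (fun ω a b hab =>
          Finset.sum_le_sum_of_subset_of_nonneg (Finset.range_subset_range.2 hab)
            fun i _ _ => Set.indicator_apply_nonneg fun _ => zero_le_one)
        (fun n ω => Finset.sum_nonneg fun i _ =>
          Set.indicator_apply_nonneg fun _ => zero_le_one)
        (fun n ω => by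
          show ∑ i ∈ Finset.range n, (f i).indicator (fun _ => (1 : ℝ)) (u, ω) ≤ g ω
          rw [hsum n (u, ω)]
          exact Set.indicator_le_indicator_of_subset
            (Set.iUnion₂_subset fun i _ => Set.subset_iUnion f i)
            (fun _ => zero_le_one) _)
        hfs_int
        (hind_int _ hUnionMeas u)
        htd
      -- Z n (u, ·) is ae-equal to the condexp of partial sums
      have hZae : ∀ᵐ ω ∂μ, ∀ n, Z n (u, ω) =
          (μ[(fun ω => ∑ i ∈ Finset.range n, (f i).indicator (fun _ => (1 : ℝ)) (u, ω)) | G]) ω := by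
        rw [ae_all_iff]
        intro n
        have hfun : (fun ω => ∑ i ∈ Finset.range n, (f i).indicator (fun _ => (1 : ℝ)) (u, ω)) =
            ∑ i ∈ Finset.range n, (fun ω => (f i).indicator (fun _ => (1 : ℝ)) (u, ω)) := by
          funext ω
          simp [Finset.sum_apply]
        rw [hfun]
        have h1 := condExp_finsetSum (ι := ℕ) (s := Finset.range n)
          (f := fun i ω => (f i).indicator (fun _ => (1 : ℝ)) (u, ω))
          (fun i _ => hind_int (f i) (hfm i) u) (m := G)
        have h2 : ∀ᵐ ω ∂μ, ∀ i,
            Y i (u, ω) = (μ[(fun ω => (f i).indicator (fun _ => (1 : ℝ)) (u, ω)) | G]) ω :=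
          ae_all_iff.2 fun i => hYu i u hu
        filter_upwards [h1, h2] with ω h1 h2
        rw [h1]
        simp only [Z, Finset.sum_apply]
        exact Finset.sum_congr rfl fun i _ => h2 i
      refine limY_ae_eq (condExp_nonneg (Eventually.of_forall fun ω =>
        Set.indicator_apply_nonneg fun _ => zero_le_one)) ?_
      filter_upwards [hA, hZae] with ω hA hZae
      exact hA.congr fun n => (hZae n).symm
  -- Step 2: dyadic approximation of X by combinations of indicators
  set s : ℕ → ℕ → Set (ℝ × Ω) := fun n k => {q | (k : ℝ) ≤ 2 ^ n * X q} with hsdef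
  have hsmeas : ∀ n k, MeasurableSet (s n k) := fun n k =>
    measurableSet_le measurable_const (measurable_const.mul hX')
  choose Yi hYi1 hYi2 using fun nk : ℕ × ℕ => hC (s nk.1 nk.2) (hsmeas nk.1 nk.2)
  set Z : ℕ → ℝ × Ω → ℝ := fun n p => (2 ^ n : ℝ)⁻¹ *
    ∑ k ∈ Finset.Icc 1 (n * 2 ^ n), Yi (n, k) p with hZdef
  have hZmeas : ∀ n, Measurable[(inferInstance : MeasurableSpace ℝ).prod G] (Z n) := fun n =>
    (Finset.measurable_sum _ fun k _ => hYi1 (n, k)).const_mul _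
  refine ⟨limY Z, limY_measurable hZmeas, fun u hu => ?_⟩
  have hrepr : ∀ n, (fun ω => phi n (X (u, ω))) =
      fun ω => (2 ^ n : ℝ)⁻¹ * ∑ k ∈ Finset.Icc 1 (n * 2 ^ n),
        (s n k).indicator (fun _ => (1 : ℝ)) (u, ω) := by
    intro n
    funext ω
    rw [← sum_indicator_eq_phi X hXnonneg n (u, ω)]
  have hphi_int : ∀ n, Integrable (fun ω => phi n (X (u, ω))) μ := by
    intro n
    refine Integrable.mono' (hXint u hu) ?_ (Eventually.of_forall fun ω => ?_)
    · rw [hrepr n]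
      exact ((Finset.measurable_sum _ fun k _ =>
        ((measurable_const.indicator (hsmeas n k)).comp
          measurable_prodMk_left)).const_mul _).aestronglyMeasurable
    · rw [Real.norm_eq_abs, abs_of_nonneg (phi_nonneg n _)]
      exact phi_le n (hXnonneg _)
  have hA := tendsto_condexp_of_monotone (μ := μ) hG
    (fs := fun n ω => phi n (X (u, ω))) (f := fun ω => X (u, ω))
    (fun ω => phi_mono (X (u, ω)) (hXnonneg _))
    (fun n ω => phi_nonneg n _)
    (fun n ω => phi_le n (hXnonneg _))
    hphi_int (hXint u hu)
    (fun ω => phi_tendsto (hXnonneg _))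
  have hZae : ∀ᵐ ω ∂μ, ∀ n, Z n (u, ω) = (μ[(fun ω => phi n (X (u, ω))) | G]) ω := by
    rw [ae_all_iff]
    intro n
    have hrepr2 : (fun ω => phi n (X (u, ω))) =
        (2 ^ n : ℝ)⁻¹ • ∑ k ∈ Finset.Icc 1 (n * 2 ^ n),
          (fun ω => (s n k).indicator (fun _ => (1 : ℝ)) (u, ω)) := by
      rw [hrepr n]
      funext ω
      simp [Finset.sum_apply, smul_eq_mul]
    rw [hrepr2]
    have h1 := condExp_smul (μ := μ) (m := G) ((2 ^ n : ℝ)⁻¹)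
      (∑ k ∈ Finset.Icc 1 (n * 2 ^ n),
        (fun ω => (s n k).indicator (fun _ => (1 : ℝ)) (u, ω)))
    have h2 := condExp_finsetSum (ι := ℕ) (s := Finset.Icc 1 (n * 2 ^ n))
      (f := fun k ω => (s n k).indicator (fun _ => (1 : ℝ)) (u, ω))
      (fun k _ => hind_int _ (hsmeas n k) u) (m := G)
    have h3 : ∀ᵐ ω ∂μ, ∀ k, Yi (n, k) (u, ω) =
        (μ[(fun ω => (s n k).indicator (fun _ => (1 : ℝ)) (u, ω)) | G]) ω :=
      ae_all_iff.2 fun k => hYi2 (n, k) u hu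
    filter_upwards [h1, h2, h3] with ω h1 h2 h3
    rw [h1]
    simp only [Pi.smul_apply, smul_eq_mul]
    rw [h2]
    simp only [Finset.sum_apply, Z]
    exact congrArg (fun t => (2 ^ n : ℝ)⁻¹ * t)
      (Finset.sum_congr rfl fun k _ => h3 k)
  refine limY_ae_eq (condExp_nonneg (Eventually.of_forall fun ω => hXnonneg _)) ?_
  filter_upwards [hA, hZae] with ω hA hZae
  exact hA.congr fun n => (hZae n).symm
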